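/- arXiv:2506.10110 — 4 statements merged into one kernel-verified Lean document; each statement's English description precedes it below -/
import Mathlib

section
/- Let h : ℝⁿ → ℝ ∪ {∞} be a proper convex function, let y ∈ ℝⁿ with h(y²) finite, and define H(z) := h(z²). Then the Fréchet (regular) subgradient inclusion 2y ∘ ∂h(y²) ⊆ ∂̂H(y) holds, where ∂h(y²) is the convex subdifferential and ∂̂H(y) is the set of v with H(z) ≥ H(y) + ⟨v, z − y⟩ + o(‖z − y‖) as z → y. -/
open scoped RealInnerProductSpace

/-- Componentwise (Hadamard) product on `EuclideanSpace ℝ (Fin n)`. -/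
noncomputable def had {n : ℕ} (x y : EuclideanSpace ℝ (Fin n)) : EuclideanSpace ℝ (Fin n) :=
  (WithLp.equiv 2 (Fin n → ℝ)).symm (fun i => x i * y i)

/-- Convex subdifferential of an extended-real-valued function. -/
noncomputable def ESub {n : ℕ} (g : EuclideanSpace ℝ (Fin n) → EReal)
    (x : EuclideanSpace ℝ (Fin n)) : Set (EuclideanSpace ℝ (Fin n)) :=
  {v | ∀ z, g x + ((⟪v, z - x⟫ : ℝ) : EReal) ≤ g z}

def EProper {n : ℕ} (g : EuclideanSpace ℝ (Fin n) → EReal) : Prop :=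
  (∃ x, g x ≠ ⊤) ∧ ∀ x, g x ≠ ⊥

def EConvexFn {n : ℕ} (g : EuclideanSpace ℝ (Fin n) → EReal) : Prop :=
  ∀ x y : EuclideanSpace ℝ (Fin n), ∀ a b : ℝ, 0 ≤ a → 0 ≤ b → a + b = 1 →
    g (a • x + b • y) ≤ (a : EReal) * g x + (b : EReal) * g y

/-- Regular (Fréchet) subdifferential:
`v ∈ ∂̂H(x)` iff `H z ≥ H x + ⟨v, z−x⟩ + o(‖z−x‖)` as `z → x`. -/
noncomputable def RegSub {n : ℕ} (H : EuclideanSpace ℝ (Fin n) → EReal)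
    (x : EuclideanSpace ℝ (Fin n)) : Set (EuclideanSpace ℝ (Fin n)) :=
  {v | ∀ ε : ℝ, 0 < ε → ∃ δ : ℝ, 0 < δ ∧ ∀ z, ‖z - x‖ < δ →
    H x + ((⟪v, z - x⟫ - ε * ‖z - x‖ : ℝ) : EReal) ≤ H z}


lemma had_inner {n : ℕ} (w z y : EuclideanSpace ℝ (Fin n)) :
    (⟪w, had z z - had y y⟫ : ℝ)
      = ⟪(2:ℝ) • had y w, z - y⟫ + ⟪w, had (z - y) (z - y)⟫ := by
  simp only [had, PiLp.inner_apply, RCLike.inner_apply, conj_trivial, PiLp.sub_apply,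
    PiLp.smul_apply, smul_eq_mul, WithLp.equiv_symm_apply, PiLp.toLp_apply]
  rw [← Finset.sum_add_distrib]
  apply Finset.sum_congr rfl
  intro i _
  ring

lemma norm_had_sq {n : ℕ} (d : EuclideanSpace ℝ (Fin n)) :
    ‖had d d‖ ≤ ‖d‖ ^ 2 := by
  have h1 : ‖had d d‖ ^ 2 ≤ (‖d‖ ^ 2) ^ 2 := by
    rw [← real_inner_self_eq_norm_sq, ← real_inner_self_eq_norm_sq]
    simp only [had, PiLp.inner_apply, RCLike.inner_apply, conj_trivial,
      WithLp.equiv_symm_apply, PiLp.toLp_apply, PiLp.sub_apply]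
    calc ∑ i, d i * d i * (d i * d i) = ∑ i, (d i * d i) ^ 2 := by
          apply Finset.sum_congr rfl; intro i _; ring
      _ ≤ (∑ i, d i * d i) ^ 2 := by
          apply Finset.sum_sq_le_sq_sum_of_nonneg
          intro i _; exact mul_self_nonneg _
  exact (pow_le_pow_iff_left₀ (norm_nonneg _) (by positivity) two_ne_zero).mp h1

/-- for a proper convex `h` with `h(y²)` finite and `H(z) := h(z²)`, the chain
rule inclusion `2y ∘ ∂h(y²) ⊆ ∂̂H(y)` holds for the regular (Fréchet) subdifferential. -/
theorem stmt2 {n : ℕ} (h : EuclideanSpace ℝ (Fin n) → EReal)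
    (hproper : EProper h) (hconv : EConvexFn h)
    (y : EuclideanSpace ℝ (Fin n)) (hfin : h (had y y) ≠ ⊤ ∧ h (had y y) ≠ ⊥)
    (H : EuclideanSpace ℝ (Fin n) → EReal) (hH : ∀ z, H z = h (had z z))
    (w : EuclideanSpace ℝ (Fin n)) (hw : w ∈ ESub h (had y y)) :
    (2 : ℝ) • had y w ∈ RegSub H y := by
  intro ε hε
  obtain ⟨r, hr⟩ : ∃ r : ℝ, h (had y y) = (r : EReal) := by
    refine ⟨(h (had y y)).toReal, ?_⟩
    exact (EReal.coe_toReal hfin.1 hfin.2).symm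
  refine ⟨ε / (‖w‖ + 1), by positivity, fun z hz => ?_⟩
  have hwz := hw (had z z)
  rw [hH z, hH y, hr] at *
  rw [hr] at hwz
  -- real inequality
  have hkey : (⟪(2:ℝ) • had y w, z - y⟫ : ℝ) - ε * ‖z - y‖ ≤ ⟪w, had z z - had y y⟫ := by
    rw [had_inner w z y]
    have h2 : -(‖w‖ * ‖had (z-y) (z-y)‖) ≤ ⟪w, had (z-y) (z-y)⟫ :=
      neg_le_of_abs_le (abs_real_inner_le_norm _ _)
    have h3 : ‖w‖ * ‖had (z-y) (z-y)‖ ≤ ‖w‖ * ‖z - y‖ ^ 2 :=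
      mul_le_mul_of_nonneg_left (norm_had_sq _) (norm_nonneg _)
    have h4 : ‖w‖ * ‖z - y‖ ^ 2 ≤ ε * ‖z - y‖ := by
      have h5 : ‖w‖ * ‖z - y‖ ≤ ε := by
        have h6 := (lt_div_iff₀ (show (0:ℝ) < ‖w‖ + 1 by positivity)).mp hz
        nlinarith [norm_nonneg (z - y)]
      calc ‖w‖ * ‖z - y‖ ^ 2 = (‖w‖ * ‖z - y‖) * ‖z - y‖ := by ring
        _ ≤ ε * ‖z - y‖ := mul_le_mul_of_nonneg_right h5 (norm_nonneg _)
    linarith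
  calc ((r : EReal)) + ((⟪(2:ℝ) • had y w, z - y⟫ - ε * ‖z - y‖ : ℝ) : EReal)
      ≤ (r : EReal) + ((⟪w, had z z - had y y⟫ : ℝ) : EReal) := by
        rw [← EReal.coe_add, ← EReal.coe_add]
        exact_mod_cast (add_le_add_iff_left r).mpr hkey
    _ ≤ h (had z z) := hwz
end

section
/- Let h : ℝⁿ → ℝ ∪ {∞} be proper, define H(y) := h(y²), suppose H(x) is finite, and let I = {i : xᵢ ≠ 0}. If v is a regular (Fréchet) subgradient of H at x, then the vector v̄ defined by v̄ᵢ = vᵢ for i ∈ I and v̄ᵢ = 0 for i ∉ I is also a regular subgradient of H at x. -/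
open scoped RealInnerProductSpace

/-
On the coordinates where `x` vanishes, flipping the sign of `z` changes neither `H z` (which
only sees the squares `zᵢ²`) nor `‖z - x‖`. Given a test point `z`, flip those coordinates so
that `vᵢ zᵢ ≥ 0`; then `⟪v̄, z - x⟫ ≤ ⟪v, z' - x⟫`, and the subgradient inequality of `v` at the
flipped point `z'` gives that of `v̄` at `z`.
-/

section SignFlip

variable {n : ℕ}

theorem mem_regSub_of_inner_le_comp {H : EuclideanSpace ℝ (Fin n) → EReal}
    {x v w : EuclideanSpace ℝ (Fin n)} (σ : EuclideanSpace ℝ (Fin n) → EuclideanSpace ℝ (Fin n))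
    (hHσ : ∀ z, H (σ z) = H z) (hnorm : ∀ z, ‖σ z - x‖ = ‖z - x‖)
    (hinner : ∀ z, ⟪w, z - x⟫ ≤ ⟪v, σ z - x⟫) (hv : v ∈ RegSub H x) : w ∈ RegSub H x := by
  intro ε hε
  obtain ⟨δ, hδ, hsub⟩ := hv ε hε
  refine ⟨δ, hδ, fun z hz => ?_⟩
  have key := hsub (σ z) (by rwa [hnorm])
  rw [hHσ, hnorm] at key
  refine le_trans ?_ key
  gcongr
  linarith [hinner z]

theorem EuclideanSpace.norm_eq_of_abs_eq {a b : EuclideanSpace ℝ (Fin n)}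
    (h : ∀ i, |a i| = |b i|) : ‖a‖ = ‖b‖ := by
  simp only [EuclideanSpace.norm_eq, Real.norm_eq_abs, h]

theorem had_self_eq_of_abs_eq {a b : EuclideanSpace ℝ (Fin n)} (h : ∀ i, |a i| = |b i|) :
    had a a = had b b := by
  ext i
  simp only [had, WithLp.equiv_symm_apply, PiLp.toLp_apply, ← abs_mul_abs_self (a i), h]
  exact abs_mul_abs_self (b i)

noncomputable def alignSigns (x v z : EuclideanSpace ℝ (Fin n)) : EuclideanSpace ℝ (Fin n) :=
  WithLp.toLp 2 fun i => if x i = 0 ∧ v i * z i < 0 then -z i else z i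

theorem alignSigns_apply (x v z : EuclideanSpace ℝ (Fin n)) (i : Fin n) :
    alignSigns x v z i = if x i = 0 ∧ v i * z i < 0 then -z i else z i :=
  rfl

theorem abs_alignSigns_apply (x v z : EuclideanSpace ℝ (Fin n)) (i : Fin n) :
    |alignSigns x v z i| = |z i| := by
  rw [alignSigns_apply]
  split_ifs <;> simp

theorem abs_alignSigns_sub_apply (x v z : EuclideanSpace ℝ (Fin n)) (i : Fin n) :
    |alignSigns x v z i - x i| = |z i - x i| := by
  rw [alignSigns_apply]
  split_ifs with hi
  · simp [hi.1]
  · simp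

theorem inner_le_inner_alignSigns_sub {x v w : EuclideanSpace ℝ (Fin n)}
    (hwI : ∀ i, x i ≠ 0 → w i = v i) (hwIc : ∀ i, x i = 0 → w i = 0)
    (z : EuclideanSpace ℝ (Fin n)) : ⟪w, z - x⟫ ≤ ⟪v, alignSigns x v z - x⟫ := by
  simp only [PiLp.inner_apply, PiLp.sub_apply, Real.inner_apply, alignSigns_apply]
  refine Finset.sum_le_sum fun i _ => ?_
  by_cases hx : x i = 0
  · rw [hwIc i hx, hx]
    split_ifs with hs <;> simp only [true_and, not_lt] at hs <;> nlinarith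
  · simp [hx, hwI i hx]

end SignFlip

theorem stmt3_general {n : ℕ} (h : EuclideanSpace ℝ (Fin n) → EReal)
    (H : EuclideanSpace ℝ (Fin n) → EReal) (hH : ∀ z, H z = h (had z z))
    (x : EuclideanSpace ℝ (Fin n))
    (v : EuclideanSpace ℝ (Fin n)) (hv : v ∈ RegSub H x)
    (vbar : EuclideanSpace ℝ (Fin n))
    (hvbarI : ∀ i, x i ≠ 0 → vbar i = v i) (hvbarIc : ∀ i, x i = 0 → vbar i = 0) :
    vbar ∈ RegSub H x := by
  refine mem_regSub_of_inner_le_comp (alignSigns x v) (fun z => ?_) (fun z => ?_)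
    (inner_le_inner_alignSigns_sub hvbarI hvbarIc) hv
  · rw [hH, hH, had_self_eq_of_abs_eq (abs_alignSigns_apply x v z)]
  · exact EuclideanSpace.norm_eq_of_abs_eq fun i => by
      simpa using abs_alignSigns_sub_apply x v z i

/-- if `H(y) = h(y²)`, `H(x)` is finite, `I = {i : xᵢ ≠ 0}` and
`v ∈ ∂̂H(x)`, then the truncation `v̄` of `v` (keeping components in `I`, zeroing the rest)
is again a regular subgradient of `H` at `x`. -/
theorem stmt3 {n : ℕ} (h : EuclideanSpace ℝ (Fin n) → EReal) (hproper : EProper h)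
    (H : EuclideanSpace ℝ (Fin n) → EReal) (hH : ∀ z, H z = h (had z z))
    (x : EuclideanSpace ℝ (Fin n)) (hfin : H x ≠ ⊤ ∧ H x ≠ ⊥)
    (v : EuclideanSpace ℝ (Fin n)) (hv : v ∈ RegSub H x)
    (vbar : EuclideanSpace ℝ (Fin n))
    (hvbarI : ∀ i, x i ≠ 0 → vbar i = v i) (hvbarIc : ∀ i, x i = 0 → vbar i = 0) :
    vbar ∈ RegSub H x :=
  stmt3_general h H hH x v hv vbar hvbarI hvbarIc
end

section
/- Let C ⊆ ℝⁿ be a nonempty convex set, let K be an exposed face of C, and suppose x ∈ ri(K), the relative interior of K. Then the minimal exposed face of C containing x equals K. -/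
/-!
Exposed faces are extreme. If an extreme subset `F` of `C` contains a relative interior point `x`
of `K ⊆ C`, then `F ⊇ K`: any segment `[y, x]` in `K` can be prolonged slightly beyond `x` inside
`K` (the line through `y` and `x` stays in the affine span of `K`), so `x` lies in the open
segment between `y` and a point of `K`, forcing `y ∈ F`. Since `K` itself is an exposed face
containing `x`, it is the smallest one.
-/

open Set AffineMap

section

variable {E : Type*} [AddCommGroup E] [Module ℝ E] [TopologicalSpace E]
  [IsTopologicalAddGroup E] [ContinuousSMul ℝ E] {K : Set E} {x y : E}

theorem exists_mem_openSegment_of_mem_intrinsicInterior (hx : x ∈ intrinsicInterior ℝ K)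
    (hy : y ∈ K) : ∃ z ∈ K, x ∈ openSegment ℝ y z := by
  obtain ⟨x', hx', rfl⟩ := mem_intrinsicInterior.1 hx
  have hline : ∀ t : ℝ, lineMap y (x' : E) t ∈ affineSpan ℝ K := fun t =>
    lineMap_mem t (subset_affineSpan ℝ K hy) x'.2
  let γ : ℝ → affineSpan ℝ K := fun t => ⟨lineMap y (x' : E) t, hline t⟩
  have hγ : Continuous γ := lineMap_continuous.subtype_mk hline
  have hγ1 : γ 1 = x' := Subtype.ext (lineMap_apply_one _ _)
  obtain ⟨δ, hδ, hball⟩ := Metric.isOpen_iff.1 (isOpen_interior.preimage hγ) 1 (by simpa [hγ1])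
  have hδ_ball : 1 + δ / 2 ∈ Metric.ball (1 : ℝ) δ := by
    rw [Metric.mem_ball, Real.dist_eq, add_sub_cancel_left, abs_of_pos (by positivity)]
    linarith
  have hγK : γ (1 + δ / 2) ∈ ((↑) ⁻¹' K : Set (affineSpan ℝ K)) := interior_subset (hball hδ_ball)
  refine ⟨_, hγK, ?_⟩
  rw [openSegment_eq_image_lineMap]
  refine ⟨(1 + δ / 2)⁻¹, ⟨by positivity, inv_lt_one_of_one_lt₀ (by linarith)⟩, ?_⟩
  rw [lineMap_lineMap_right, inv_mul_cancel₀ (by positivity), lineMap_apply_one]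

theorem IsExtreme.subset_of_mem_intrinsicInterior {C F : Set E} (hF : IsExtreme ℝ C F)
    (hKC : K ⊆ C) (hx : x ∈ intrinsicInterior ℝ K) (hxF : x ∈ F) : K ⊆ F := fun _ hy =>
  have ⟨_, hzK, hxyz⟩ := exists_mem_openSegment_of_mem_intrinsicInterior hx hy
  hF.left_mem_of_mem_openSegment (hKC hy) (hKC hzK) hxF hxyz

end

theorem stmt7_general {n : ℕ} (C K : Set (EuclideanSpace ℝ (Fin n)))
    (hK : IsExposed ℝ C K) (x : EuclideanSpace ℝ (Fin n))
    (hx : x ∈ intrinsicInterior ℝ K) :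
    ⋂₀ {F | IsExposed ℝ C F ∧ x ∈ F} = K := by
  apply subset_antisymm
  · exact sInter_subset_of_mem ⟨hK, intrinsicInterior_subset hx⟩
  · rintro y hy F ⟨hF, hxF⟩
    exact hF.isExtreme.subset_of_mem_intrinsicInterior hK.subset hx hxF hy

/-- if `K` is an exposed face of the nonempty convex set `C` and
`x` lies in the relative (intrinsic) interior of `K`, then the minimal exposed face of `C`
containing `x` (the intersection of all exposed faces of `C` containing `x`) equals `K`. -/
theorem stmt7 {n : ℕ} (C K : Set (EuclideanSpace ℝ (Fin n)))
    (hCne : C.Nonempty) (hCcv : Convex ℝ C)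
    (hK : IsExposed ℝ C K) (x : EuclideanSpace ℝ (Fin n))
    (hx : x ∈ intrinsicInterior ℝ K) :
    ⋂₀ {F | IsExposed ℝ C F ∧ x ∈ F} = K :=
  stmt7_general C K hK x hx
end

section
/- Let f : ℝⁿ → ℝ be twice continuously differentiable, Φ(y) := f(y²), y ∈ ℝⁿ, x := y², and I = {i : yᵢ ≠ 0}. Then the following are equivalent: (i) ∇Φ(y) = 0 and ⟨w, ∇²Φ(y) w⟩ ≥ 0 for all w with w_I = 0; (ii) x is a KKT point of min{f(x) : x ≥ 0}, i.e. x ≥ 0, ∇f(x)ᵢ = 0 for all i ∈ I, and ∇f(x)ᵢ ≥ 0 for all i ∉ I. -/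
open scoped RealInnerProductSpace

/-!
Write `Φ = f ∘ q` with `q z = z ∘ z`, a diagonal of a bilinear map. The chain rule gives
`∇Φ(y) = 2 y ∘ ∇f(y²)`, and along a direction `w` with `y ∘ w = 0` the Hessian term of `f` drops
out of the second derivative, leaving `⟨w, ∇²Φ(y) w⟩ = 2 ⟨∇f(y²), w ∘ w⟩`. The first condition
of (i) is then complementary slackness on `I`, and testing the second with coordinate vectors
off `I` gives the sign conditions.
-/

section BilinearDiagonal

variable {𝕜 E F G : Type*} [NontriviallyNormedField 𝕜] [NormedAddCommGroup E] [NormedSpace 𝕜 E]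
  [NormedAddCommGroup F] [NormedSpace 𝕜 F] [NormedAddCommGroup G] [NormedSpace 𝕜 G]
  (B : E →L[𝕜] E →L[𝕜] F) {f : F → G}

theorem ContinuousLinearMap.hasFDerivAt_bilinear_diag (z : E) :
    HasFDerivAt (fun z => B z z) (B z + B.flip z) z := by
  refine (B.hasFDerivAt_of_bilinear (hasFDerivAt_id z) (hasFDerivAt_id z)).congr_fderiv ?_
  ext w
  simp

theorem ContinuousLinearMap.hasFDerivAt_comp_bilinear_diag {z : E}
    (hf : DifferentiableAt 𝕜 f (B z z)) :
    HasFDerivAt (fun z => f (B z z)) ((fderiv 𝕜 f (B z z)).comp (B z + B.flip z)) z :=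
  hf.hasFDerivAt.comp (f := fun z => B z z) z (B.hasFDerivAt_bilinear_diag z)

theorem ContinuousLinearMap.fderiv_fderiv_comp_bilinear_diag_apply {y : E}
    (hf : Differentiable 𝕜 f) (hf' : DifferentiableAt 𝕜 (fderiv 𝕜 f) (B y y)) (w : E) :
    fderiv 𝕜 (fun z => fderiv 𝕜 (fun z => f (B z z)) z w) y w =
      fderiv 𝕜 (fderiv 𝕜 f) (B y y) (B y w + B w y) (B y w + B w y) +
        fderiv 𝕜 f (B y y) (B w w + B w w) := by
  have hfun : (fun z => fderiv 𝕜 (fun z => f (B z z)) z w) =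
      fun z => fderiv 𝕜 f (B z z) ((B.flip w + B w) z) := by
    funext z
    exact congrArg (· w) (B.hasFDerivAt_comp_bilinear_diag (hf _)).fderiv
  have hA : HasFDerivAt (fun z => fderiv 𝕜 f (B z z))
      ((fderiv 𝕜 (fderiv 𝕜 f) (B y y)).comp (B y + B.flip y)) y :=
    hf'.hasFDerivAt.comp (f := fun z => B z z) y (B.hasFDerivAt_bilinear_diag y)
  rw [hfun, (hA.clm_apply (B.flip w + B w).hasFDerivAt).fderiv]
  simp [add_comm]

end BilinearDiagonal

section Hadamard

variable {n : ℕ}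

theorem had_apply (x y : EuclideanSpace ℝ (Fin n)) (i : Fin n) : had x y i = x i * y i := rfl

theorem had_comm (x y : EuclideanSpace ℝ (Fin n)) : had x y = had y x := by
  ext i
  simp only [had_apply, mul_comm]

theorem had_eq_zero_iff {x y : EuclideanSpace ℝ (Fin n)} :
    had x y = 0 ↔ ∀ i, x i ≠ 0 → y i = 0 := by
  simp only [PiLp.ext_iff, had_apply, PiLp.zero_apply, mul_eq_zero, or_iff_not_imp_left]

theorem inner_had (a x y : EuclideanSpace ℝ (Fin n)) : ⟪a, had x y⟫ = ∑ i, a i * x i * y i := by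
  simp only [PiLp.inner_apply, had_apply, RCLike.inner_apply, conj_trivial]
  exact Finset.sum_congr rfl fun i _ => by ring

theorem inner_had_right_eq_inner_had_left (a x y : EuclideanSpace ℝ (Fin n)) :
    ⟪a, had x y⟫ = ⟪had x a, y⟫ := by
  rw [inner_had, real_inner_comm, inner_had]
  exact Finset.sum_congr rfl fun i _ => by ring

theorem isBilinearMap_had : IsBilinearMap ℝ (had (n := n)) where
  add_left x₁ x₂ y := by ext i; simp [had_apply, add_mul]
  smul_left c x y := by ext i; simp [had_apply, mul_assoc]
  add_right x y₁ y₂ := by ext i; simp [had_apply, mul_add]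
  smul_right c x y := by ext i; simp [had_apply, mul_left_comm]

noncomputable def hadL : EuclideanSpace ℝ (Fin n) →L[ℝ] EuclideanSpace ℝ (Fin n) →L[ℝ]
    EuclideanSpace ℝ (Fin n) :=
  isBilinearMap_had.toContinuousBilinearMap

@[simp]
theorem hadL_apply (x y : EuclideanSpace ℝ (Fin n)) : hadL x y = had x y := rfl

end Hadamard

section SquareSubstitution

variable {n : ℕ} {f : EuclideanSpace ℝ (Fin n) → ℝ} {y : EuclideanSpace ℝ (Fin n)}

theorem gradient_comp_had_self (hf : DifferentiableAt ℝ f (had y y)) :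
    gradient (fun z => f (had z z)) y = (2 : ℝ) • had y (gradient f (had y y)) := by
  refine HasGradientAt.gradient ((hadL.hasFDerivAt_comp_bilinear_diag hf).congr_fderiv ?_)
  ext v
  simp only [ContinuousLinearMap.comp_apply, add_apply,
    ContinuousLinearMap.flip_apply, hadL_apply, InnerProductSpace.toDual_apply_apply]
  rw [had_comm v y, ← inner_gradient_left, inner_add_right, real_inner_smul_left,
    inner_had_right_eq_inner_had_left]
  ring

theorem fderiv_fderiv_comp_had_self_apply (hf : ContDiff ℝ 2 f) {w : EuclideanSpace ℝ (Fin n)}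
    (hyw : had y w = 0) :
    fderiv ℝ (fun z => fderiv ℝ (fun z => f (had z z)) z w) y w =
      2 * ⟪gradient f (had y y), had w w⟫ := by
  have hf₁ : Differentiable ℝ f := hf.differentiable (by norm_num)
  have hf₂ : Differentiable ℝ (fderiv ℝ f) :=
    (hf.fderiv_right (le_refl _)).differentiable one_ne_zero
  have hchain := hadL.fderiv_fderiv_comp_bilinear_diag_apply hf₁ (hf₂ (hadL y y)) w
  simp only [hadL_apply] at hchain
  rw [hchain, had_comm w y, hyw, ← inner_gradient_left, inner_add_right]
  simp only [add_zero, map_zero, zero_add]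
  ring

theorem forall_inner_had_self_nonneg_iff (g : EuclideanSpace ℝ (Fin n)) (p : Fin n → Prop) :
    (∀ w : EuclideanSpace ℝ (Fin n), (∀ i, p i → w i = 0) → 0 ≤ ⟪g, had w w⟫) ↔
      ∀ i, ¬ p i → 0 ≤ g i := by
  constructor
  · intro h i hi
    have hsingle := h (EuclideanSpace.single i 1) fun j hj => by
      rw [PiLp.single_apply, if_neg (ne_of_apply_ne p (by simp [hj, hi]))]
    simpa [inner_had, PiLp.single_apply] using hsingle
  · intro h w hw
    rw [inner_had]
    refine Finset.sum_nonneg fun i _ => ?_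
    by_cases hi : p i
    · simp [hw i hi]
    · rw [mul_assoc]
      exact mul_nonneg (h i hi) (mul_self_nonneg _)

end SquareSubstitution

/-- for `f ∈ C²`, `Φ(y) = f(y²)`, `x = y²` and `I = {i : yᵢ ≠ 0}`,
the following are equivalent:
(i) `∇Φ(y) = 0` and `⟨w, ∇²Φ(y)w⟩ ≥ 0` for all `w` with `w_I = 0`;
(ii) `x` is a KKT point of `min {f(x) : x ≥ 0}`, i.e. `x ≥ 0`, `∇f(x)ᵢ = 0` for `i ∈ I`,
`∇f(x)ᵢ ≥ 0` for `i ∉ I`. -/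
theorem stmt14 {n : ℕ} (f : EuclideanSpace ℝ (Fin n) → ℝ) (hf : ContDiff ℝ 2 f)
    (Φ : EuclideanSpace ℝ (Fin n) → ℝ) (hΦ : ∀ z, Φ z = f (had z z))
    (y x : EuclideanSpace ℝ (Fin n)) (hx : x = had y y) :
    (gradient Φ y = 0 ∧
      ∀ w : EuclideanSpace ℝ (Fin n), (∀ i, y i ≠ 0 → w i = 0) →
        0 ≤ fderiv ℝ (fun z => fderiv ℝ Φ z w) y w) ↔
    ((∀ i, 0 ≤ x i) ∧ (∀ i, y i ≠ 0 → gradient f x i = 0) ∧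
      (∀ i, y i = 0 → 0 ≤ gradient f x i)) := by
  obtain rfl : Φ = fun z => f (had z z) := funext hΦ
  subst hx
  have hHess : ∀ w : EuclideanSpace ℝ (Fin n), (∀ i, y i ≠ 0 → w i = 0) →
      (0 ≤ fderiv ℝ (fun z => fderiv ℝ (fun z => f (had z z)) z w) y w ↔
        0 ≤ ⟪gradient f (had y y), had w w⟫) := fun w hw => by
    rw [fderiv_fderiv_comp_had_self_apply hf (had_eq_zero_iff.mpr hw)]
    exact mul_nonneg_iff_of_pos_left two_pos
  rw [gradient_comp_had_self (hf.differentiable (by norm_num) _), smul_eq_zero,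
    or_iff_right two_ne_zero, had_eq_zero_iff, forall_congr' fun w => forall_congr' (hHess w),
    forall_inner_had_self_nonneg_iff]
  simp only [had_apply, mul_self_nonneg, implies_true, true_and, not_not]
end
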